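/- arXiv:2308.04730 — 2 statements merged into one kernel-verified Lean document; each statement's English description precedes it below -/
import Mathlib

section
/- Let h, T > 0, n ∈ ℕ, let g : [0,T]×ℝ^n×ℝ^n → ℝ^n satisfy (H1) with Lipschitz constant L, and let r : H¹(−h,0;ℝ^n) → [−h,0] satisfy (H2). Let φ ∈ H¹(−h,0;ℝ^n) have essentially bounded weak derivative and let x ∈ H¹(−h,T;ℝ^n) solve x′(t) = g(t, x(t), x(t + r(x_{(t)}))) on (0,T) with x_{(0)} = φ. Then for all t ∈ [0,T]: ‖x(t)‖ ≤ (‖φ‖_∞ + ∫₀^t ‖g(s,0,0)‖ ds) e^{2Lt}. -/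
open MeasureTheory Set Filter

section Prelims

variable {E : Type*} [NormedAddCommGroup E] [NormedSpace ℝ E]

/-- `f` belongs to `H¹(a,b;E)` with weak derivative `f'`; `f` is identified with its
continuous representative, so that the fundamental theorem of calculus holds. -/
structure MemH1 (a b : ℝ) (f f' : ℝ → E) : Prop where
  contOn : ContinuousOn f (Set.Icc a b)
  memL2 : MeasureTheory.MemLp f 2 (MeasureTheory.volume.restrict (Set.Ioo a b))
  derivMemL2 : MeasureTheory.MemLp f' 2 (MeasureTheory.volume.restrict (Set.Ioo a b))
  ftc : ∀ t ∈ Set.Icc a b, f t = f a + ∫ s in a..t, f' s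

/-- The `H¹(a,b)`-norm of a function `f` with weak derivative `f'`. -/
noncomputable def H1norm (a b : ℝ) (f f' : ℝ → E) : ℝ :=
  Real.sqrt ((∫ t in Set.Ioo a b, ‖f t‖ ^ 2) + ∫ t in Set.Ioo a b, ‖f' t‖ ^ 2)

/-- Membership in `V_β = {ψ ∈ H¹(-h,0;E) : ‖ψ'‖_∞ ≤ β}`. -/
def VbetaMem (h β : ℝ) (ψ ψ' : ℝ → E) : Prop :=
  MemH1 (-h) 0 ψ ψ' ∧
    ∀ᵐ t ∂(MeasureTheory.volume.restrict (Set.Ioo (-h) (0 : ℝ))), ‖ψ' t‖ ≤ β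

/-- The pre-history of `x` at time `t`: `s ↦ x (t + s)`. -/
def prehist (x : ℝ → E) (t : ℝ) : ℝ → E := fun s => x (t + s)

end Prelims

section SDD

variable {E : Type*} [NormedAddCommGroup E] [NormedSpace ℝ E]

/-- `x` (with weak derivative `xd`) solves the state-dependent delay equation
`x'(t) = g (t, x(t), x(t + r(x_{(t)})))` on `(0,T)` with pre-history `φ`,
as an element of `H¹(-h,T;E)`. -/
def SolSDD (h T : ℝ) (g : ℝ → E → E → E) (r : (ℝ → E) → ℝ) (φ : ℝ → E)
    (x xd : ℝ → E) : Prop :=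
  MemH1 (-h) T x xd ∧
    (∀ t ∈ Set.Ioo 0 T, xd t = g t (x t) (x (t + r (prehist x t)))) ∧
    (∀ s ∈ Set.Icc (-h) 0, x s = φ s)

end SDD

/-! With `C = sup_{[-h,0]} ‖φ‖`, the function `Y t = C + ∫₀ᵗ ‖x'‖` dominates `‖x‖` on the whole
past `[-h, t]`, in particular at the delayed argument `t + r (x_(t)) ∈ [-h, t]`. Hence (H1) gives
`‖x' t‖ ≤ ‖g t 0 0‖ + 2 L Y t`, and integrating,
`Y t ≤ (C + ∫₀ᵗ ‖g s 0 0‖ ds) + 2 L ∫₀ᵗ Y`. Grönwall's inequality with a nondecreasing forcing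
term turns this into `‖x t‖ ≤ Y t ≤ (C + ∫₀ᵗ ‖g s 0 0‖ ds) e^{2 L t}`. -/

lemma mul_gronwallBound_zero (K ε x : ℝ) :
    K * gronwallBound 0 K ε x = ε * (Real.exp (K * x) - 1) := by
  rcases eq_or_ne K 0 with rfl | hK
  · simp
  · rw [gronwallBound_of_K_ne_0 hK]
    field_simp
    ring

lemma hasDerivWithinAt_integral_Ici_of_continuousOn {u : ℝ → ℝ} {a b s : ℝ}
    (hu : ContinuousOn u (Icc a b)) (hs : s ∈ Ico a b) :
    HasDerivWithinAt (fun t => ∫ v in a..t, u v) (u s) (Ici s) s := by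
  have hs' : s ∈ Icc a b := Ico_subset_Icc_self hs
  have : Fact (s ∈ Icc a b) := ⟨hs'⟩
  refine (intervalIntegral.integral_hasDerivWithinAt_right ?_
    (hu.stronglyMeasurableAtFilter_nhdsWithin measurableSet_Icc s) (hu s hs')
    ).mono_of_mem_nhdsWithin (Icc_mem_nhdsGE_of_mem hs)
  exact (hu.mono (uIcc_subset_Icc ⟨le_rfl, hs'.1.trans hs'.2⟩ hs')).intervalIntegrable

/- Apply the differential Grönwall inequality to `U = ∫₀ u` on `[0, t]`, where `U' = u ≤ A t + K U`
since `A` is nondecreasing; then `u t ≤ A t + K U t`. -/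
theorem le_mul_exp_of_le_add_mul_integral {u A : ℝ → ℝ} {K T : ℝ} (hK : 0 ≤ K)
    (hu : ContinuousOn u (Icc 0 T)) (hA : MonotoneOn A (Icc 0 T))
    (h : ∀ t ∈ Icc 0 T, u t ≤ A t + K * ∫ s in 0..t, u s) :
    ∀ t ∈ Icc 0 T, u t ≤ A t * Real.exp (K * t) := by
  intro t ht
  have hsub : Icc 0 t ⊆ Icc 0 T := Icc_subset_Icc_right ht.2
  have hU : ContinuousOn (fun s => ∫ v in 0..s, u v) (Icc 0 t) := by
    simpa [uIcc_of_le ht.1] using intervalIntegral.continuousOn_primitive_interval (μ := volume)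
      (((hu.mono hsub).integrableOn_Icc).mono_set (uIcc_of_le ht.1).subset)
  have hU_le := le_gronwallBound_of_liminf_deriv_right_le (f' := u) (δ := 0) (K := K)
    (ε := A t) hU
    (fun s hs r hr =>
      (hasDerivWithinAt_integral_Ici_of_continuousOn (hu.mono hsub) hs).liminf_right_slope_le hr)
    (by simp)
    (fun s hs => (h s (hsub (Ico_subset_Icc_self hs))).trans <| by
      rw [add_comm]
      gcongr
      exact hA (hsub (Ico_subset_Icc_self hs)) ht hs.2.le)
    t (right_mem_Icc.2 ht.1)
  calc u t ≤ A t + K * ∫ s in 0..t, u s := h t ht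
    _ ≤ A t + K * gronwallBound 0 K (A t) t := by rw [sub_zero] at hU_le; gcongr
    _ = A t * Real.exp (K * t) := by rw [mul_gronwallBound_zero]; ring

lemma monotoneOn_integral_of_nonneg {f : ℝ → ℝ} {a b : ℝ} (hf : IntegrableOn f (Icc a b))
    (hf0 : ∀ x ∈ Icc a b, 0 ≤ f x) : MonotoneOn (fun t => ∫ u in a..t, f u) (Icc a b) :=
  fun _ hs _ ht hst => intervalIntegral.integral_mono_interval le_rfl hs.1 hst
    ((ae_restrict_mem measurableSet_Ioc).mono fun x hx => hf0 x ⟨hx.1.le, hx.2.trans ht.2⟩)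
    (hf.mono_set (uIcc_subset_Icc ⟨le_rfl, hs.1.trans hs.2⟩ ht)).intervalIntegrable

lemma norm_le_iSup_norm_of_continuousOn {E : Type*} [SeminormedAddCommGroup E] {f : ℝ → E}
    {a b s : ℝ} (hf : ContinuousOn f (Icc a b)) (hs : s ∈ Icc a b) :
    ‖f s‖ ≤ ⨆ σ : Icc a b, ‖f σ‖ := by
  refine le_ciSup (f := fun σ : Icc a b => ‖f σ‖) ?_ ⟨s, hs⟩
  have := (isCompact_Icc.image_of_continuousOn hf.norm).bddAbove
  rwa [image_eq_range] at this

namespace MemH1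

variable {E : Type*} [NormedAddCommGroup E] [NormedSpace ℝ E] {a b s t : ℝ} {f f' : ℝ → E}

lemma integrableOn_deriv (hf : MemH1 a b f f') : IntegrableOn f' (Icc a b) := by
  rw [IntegrableOn, ← Measure.restrict_congr_set Ioo_ae_eq_Icc]
  have : IsFiniteMeasure (volume.restrict (Ioo a b)) := by
    rw [isFiniteMeasure_restrict]; exact measure_Ioo_lt_top.ne
  exact hf.derivMemL2.integrable one_le_two

lemma intervalIntegrable_norm_deriv (hf : MemH1 a b f f') (hs : s ∈ Icc a b) (ht : t ∈ Icc a b) :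
    IntervalIntegrable (fun u => ‖f' u‖) volume s t :=
  IntegrableOn.intervalIntegrable (hf.integrableOn_deriv.mono_set (uIcc_subset_Icc hs ht)).norm

lemma continuousOn_integral_norm_deriv (hf : MemH1 a b f f') (hs : s ∈ Icc a b)
    (ht : t ∈ Icc a b) (hst : s ≤ t) :
    ContinuousOn (fun τ => ∫ u in s..τ, ‖f' u‖) (Icc s t) := by
  simpa [uIcc_of_le hst] using intervalIntegral.continuousOn_primitive_interval
    (hf.integrableOn_deriv.mono_set (uIcc_subset_Icc hs ht)).norm

lemma sub_eq_integral (hf : MemH1 a b f f') (hs : s ∈ Icc a b) (ht : t ∈ Icc a b) :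
    f t - f s = ∫ u in s..t, f' u := by
  have hab : a ∈ Icc a b := ⟨le_rfl, hs.1.trans hs.2⟩
  rw [hf.ftc t ht, hf.ftc s hs, add_sub_add_left_eq_sub,
    intervalIntegral.integral_interval_sub_left
      (hf.integrableOn_deriv.mono_set (uIcc_subset_Icc hab ht)).intervalIntegrable
      (hf.integrableOn_deriv.mono_set (uIcc_subset_Icc hab hs)).intervalIntegrable]

lemma norm_le_add_integral_norm (hf : MemH1 a b f f') (hs : s ∈ Icc a b) (ht : t ∈ Icc a b)
    (hst : s ≤ t) : ‖f t‖ ≤ ‖f s‖ + ∫ u in s..t, ‖f' u‖ :=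
  calc ‖f t‖ ≤ ‖f s‖ + ‖f t - f s‖ := norm_le_norm_add_norm_sub' _ _
    _ ≤ ‖f s‖ + ∫ u in s..t, ‖f' u‖ := by
      rw [hf.sub_eq_integral hs ht]
      gcongr
      exact intervalIntegral.norm_integral_le_integral_norm hst

end MemH1

namespace SolSDD

variable {E : Type*} [NormedAddCommGroup E] [NormedSpace ℝ E] {h T C L : ℝ}
  {g : ℝ → E → E → E} {r : (ℝ → E) → ℝ} {φ x xd : ℝ → E}

lemma norm_le_add_integral_norm (hx : SolSDD h T g r φ x xd) (hh : 0 ≤ h)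
    (hC : ∀ σ ∈ Icc (-h) 0, ‖φ σ‖ ≤ C) {s σ : ℝ} (hs : s ∈ Icc 0 T) (hσ : σ ∈ Icc (-h) s) :
    ‖x σ‖ ≤ C + ∫ u in 0..s, ‖xd u‖ := by
  have h0 : (0 : ℝ) ∈ Icc (-h) T := ⟨neg_nonpos.2 hh, hs.1.trans hs.2⟩
  have hs' : s ∈ Icc (-h) T := ⟨h0.1.trans hs.1, hs.2⟩
  rcases le_or_gt σ 0 with hσ0 | hσ0
  · rw [hx.2.2 σ ⟨hσ.1, hσ0⟩]
    have := intervalIntegral.integral_nonneg (μ := volume) hs.1 fun u _ => norm_nonneg (xd u)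
    linarith [hC σ ⟨hσ.1, hσ0⟩]
  · have hx0 : ‖x 0‖ ≤ C := hx.2.2 0 ⟨h0.1, le_rfl⟩ ▸ hC 0 ⟨h0.1, le_rfl⟩
    calc ‖x σ‖ ≤ ‖x 0‖ + ∫ u in 0..σ, ‖xd u‖ :=
          hx.1.norm_le_add_integral_norm h0 ⟨hσ.1, hσ.2.trans hs.2⟩ hσ0.le
      _ ≤ C + ∫ u in 0..s, ‖xd u‖ := by
          gcongr
          exact intervalIntegral.integral_mono_interval le_rfl hσ0.le hσ.2
            (Eventually.of_forall fun u => norm_nonneg (xd u))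
            (hx.1.intervalIntegrable_norm_deriv h0 hs')

variable (hh : 0 ≤ h) (hC : ∀ σ ∈ Icc (-h) 0, ‖φ σ‖ ≤ C) (hr : ∀ ψ, r ψ ∈ Icc (-h) 0)
  (hL : 0 ≤ L)
  (hg_lip : ∀ t ∈ Icc (0 : ℝ) T, ∀ x y u v, ‖g t x u - g t y v‖ ≤ L * (‖x - y‖ + ‖u - v‖))
include hh hC hr hL hg_lip

lemma norm_deriv_le (hx : SolSDD h T g r φ x xd) {s : ℝ} (hs : s ∈ Ioo 0 T) :
    ‖xd s‖ ≤ ‖g s 0 0‖ + 2 * L * (C + ∫ u in 0..s, ‖xd u‖) := by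
  set τ := s + r (prehist x s)
  have hsI : s ∈ Icc 0 T := Ioo_subset_Icc_self hs
  have hτ : τ ∈ Icc (-h) s := by
    have := hr (prehist x s)
    constructor <;> linarith [this.1, this.2, hs.1]
  have hxs := hx.norm_le_add_integral_norm hh hC hsI ⟨by linarith [hs.1], le_rfl⟩
  have hxτ := hx.norm_le_add_integral_norm hh hC hsI hτ
  have hlip := hg_lip s hsI (x s) 0 (x τ) 0
  rw [sub_zero, sub_zero] at hlip
  rw [hx.2.1 s hs]
  calc ‖g s (x s) (x τ)‖ ≤ ‖g s 0 0‖ + ‖g s (x s) (x τ) - g s 0 0‖ :=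
        norm_le_norm_add_norm_sub' _ _
    _ ≤ ‖g s 0 0‖ + L * (‖x s‖ + ‖x τ‖) := by gcongr
    _ ≤ ‖g s 0 0‖ + 2 * L * (C + ∫ u in 0..s, ‖xd u‖) := by
        linarith [mul_le_mul_of_nonneg_left (add_le_add hxs hxτ) hL]

lemma le_add_mul_integral (hx : SolSDD h T g r φ x xd)
    (hg0 : ContinuousOn (fun s => ‖g s 0 0‖) (Icc 0 T)) {t : ℝ} (ht : t ∈ Icc 0 T) :
    C + ∫ u in 0..t, ‖xd u‖ ≤
      (C + ∫ u in 0..t, ‖g u 0 0‖) + 2 * L * ∫ s in 0..t, (C + ∫ u in 0..s, ‖xd u‖) := by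
  have h0 : (0 : ℝ) ∈ Icc (-h) T := ⟨neg_nonpos.2 hh, ht.1.trans ht.2⟩
  have hsub : Icc 0 t ⊆ Icc 0 T := Icc_subset_Icc_right ht.2
  have hgi : IntervalIntegrable (fun s => ‖g s 0 0‖) volume 0 t :=
    (hg0.mono hsub).intervalIntegrable_of_Icc ht.1
  have hYi : IntervalIntegrable (fun s => C + ∫ u in 0..s, ‖xd u‖) volume 0 t :=
    (continuousOn_const.add (hx.1.continuousOn_integral_norm_deriv h0 ⟨h0.1.trans ht.1, ht.2⟩
      ht.1)).intervalIntegrable_of_Icc ht.1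
  have hint := intervalIntegral.integral_mono_on_of_le_Ioo ht.1
    (hx.1.intervalIntegrable_norm_deriv h0 ⟨h0.1.trans ht.1, ht.2⟩) (hgi.add (hYi.const_mul (2 * L)))
    fun s hs => norm_deriv_le hh hC hr hL hg_lip hx ⟨hs.1, hs.2.trans_le ht.2⟩
  rw [intervalIntegral.integral_add hgi (hYi.const_mul _), intervalIntegral.integral_const_mul]
    at hint
  linarith

end SolSDD

theorem stmt9_general (h T : ℝ) (hh : 0 < h) (n : ℕ)
    (g : ℝ → EuclideanSpace ℝ (Fin n) → EuclideanSpace ℝ (Fin n) → EuclideanSpace ℝ (Fin n))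
    (hg_cont : ContinuousOn
      (fun p : ℝ × EuclideanSpace ℝ (Fin n) × EuclideanSpace ℝ (Fin n) => g p.1 p.2.1 p.2.2)
      (Set.Icc 0 T ×ˢ (Set.univ : Set (EuclideanSpace ℝ (Fin n) × EuclideanSpace ℝ (Fin n)))))
    (L : ℝ) (hL : 0 ≤ L)
    (hg_lip : ∀ t ∈ Set.Icc (0 : ℝ) T, ∀ x y u v,
      ‖g t x u - g t y v‖ ≤ L * (‖x - y‖ + ‖u - v‖))
    (r : (ℝ → EuclideanSpace ℝ (Fin n)) → ℝ)
    (hr_range : ∀ ψ, r ψ ∈ Set.Icc (-h) 0)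
    (φ φd : ℝ → EuclideanSpace ℝ (Fin n)) (hφ : MemH1 (-h) 0 φ φd)
    (x xd : ℝ → EuclideanSpace ℝ (Fin n)) (hx : SolSDD h T g r φ x xd) :
    ∀ t ∈ Set.Icc (0 : ℝ) T,
      ‖x t‖ ≤ ((⨆ s : Set.Icc (-h) (0 : ℝ), ‖φ (s : ℝ)‖) + ∫ s in (0 : ℝ)..t, ‖g s 0 0‖) *
        Real.exp (2 * L * t) := by
  intro t ht
  set C := ⨆ s : Icc (-h) (0 : ℝ), ‖φ s‖
  have hC : ∀ σ ∈ Icc (-h) 0, ‖φ σ‖ ≤ C := fun σ hσ =>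
    norm_le_iSup_norm_of_continuousOn hφ.contOn hσ
  have hg0 : ContinuousOn (fun s => ‖g s 0 0‖) (Icc 0 T) :=
    (hg_cont.comp (f := fun s : ℝ => (s, (0, 0)))
      (continuous_id.prodMk continuous_const).continuousOn fun s hs => ⟨hs, mem_univ _⟩).norm
  have hY : ContinuousOn (fun s => C + ∫ u in 0..s, ‖xd u‖) (Icc 0 T) :=
    continuousOn_const.add <| hx.1.continuousOn_integral_norm_deriv
      ⟨neg_nonpos.2 hh.le, ht.1.trans ht.2⟩ ⟨by linarith [ht.1, ht.2], le_rfl⟩ (ht.1.trans ht.2)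
  have hA : MonotoneOn (fun s => C + ∫ u in 0..s, ‖g u 0 0‖) (Icc 0 T) := fun a ha b hb hab =>
    add_le_add le_rfl (monotoneOn_integral_of_nonneg hg0.integrableOn_Icc
      (fun _ _ => norm_nonneg _) ha hb hab)
  calc ‖x t‖ ≤ C + ∫ u in 0..t, ‖xd u‖ :=
        hx.norm_le_add_integral_norm hh.le hC ht ⟨by linarith [ht.1], le_rfl⟩
    _ ≤ _ := le_mul_exp_of_le_add_mul_integral (by positivity) hY hA
        (fun s hs => hx.le_add_mul_integral hh.le hC hr_range hL hg_lip hg0 hs) t ht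

/-- **A priori exponential bound for solutions** (Lemma 4.6). If `x ∈ H¹(-h,T;ℝⁿ)` solves
the state-dependent delay equation with pre-history `φ` (with bounded weak derivative),
then `‖x(t)‖ ≤ (‖φ‖_∞ + ∫₀ᵗ ‖g(s,0,0)‖ ds) e^{2Lt}` for all `t ∈ [0,T]`. -/
theorem stmt9 (h T : ℝ) (hh : 0 < h) (hT : 0 < T) (n : ℕ)
    (g : ℝ → EuclideanSpace ℝ (Fin n) → EuclideanSpace ℝ (Fin n) → EuclideanSpace ℝ (Fin n))
    (hg_cont : ContinuousOn
      (fun p : ℝ × EuclideanSpace ℝ (Fin n) × EuclideanSpace ℝ (Fin n) => g p.1 p.2.1 p.2.2)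
      (Set.Icc 0 T ×ˢ (Set.univ : Set (EuclideanSpace ℝ (Fin n) × EuclideanSpace ℝ (Fin n)))))
    (L : ℝ) (hL : 0 ≤ L)
    (hg_lip : ∀ t ∈ Set.Icc (0 : ℝ) T, ∀ x y u v,
      ‖g t x u - g t y v‖ ≤ L * (‖x - y‖ + ‖u - v‖))
    (r : (ℝ → EuclideanSpace ℝ (Fin n)) → ℝ)
    (hr_range : ∀ ψ, r ψ ∈ Set.Icc (-h) 0)
    (Lr : ℝ)
    (hr_lip : ∀ φ φd ψ ψd, MemH1 (-h) 0 φ φd → MemH1 (-h) 0 ψ ψd →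
      |r φ - r ψ| ≤ Lr * H1norm (-h) 0 (φ - ψ) (φd - ψd))
    (φ φd : ℝ → EuclideanSpace ℝ (Fin n)) (hφ : MemH1 (-h) 0 φ φd)
    (M : ℝ) (hφbd : ∀ᵐ t ∂(volume.restrict (Set.Ioo (-h) (0 : ℝ))), ‖φd t‖ ≤ M)
    (x xd : ℝ → EuclideanSpace ℝ (Fin n)) (hx : SolSDD h T g r φ x xd) :
    ∀ t ∈ Set.Icc (0 : ℝ) T,
      ‖x t‖ ≤ ((⨆ s : Set.Icc (-h) (0 : ℝ), ‖φ (s : ℝ)‖) + ∫ s in (0 : ℝ)..t, ‖g s 0 0‖) *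
        Real.exp (2 * L * t) :=
  stmt9_general h T hh n g hg_cont L hL hg_lip r hr_range φ φd hφ x xd hx
end

section
/- (Permanence principle.) Let h, T > 0, n ∈ ℕ, let g satisfy (H1), r satisfy (H2), let φ ∈ H¹(−h,0;ℝ^n) have essentially bounded weak derivative, and let x ∈ H¹(−h,T;ℝ^n) solve x′(t) = g(t, x(t), x(t + r(x_{(t)}))) on (0,T) with x_{(0)} = φ. Then for every ε > 0 there exists T_ε ∈ (0,T] such that for all t with 0 < t ≤ T_ε: sup_{s∈[−h,0]} ‖x(s+t) − φ(s)‖ + ‖x′(t) − g(0, φ(0), φ(r(φ)))‖ ≤ ε. -/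
open MeasureTheory Set Filter

open scoped ENNReal Topology

/-! As `t → 0⁺` the pre-history `x_{(t)}` tends to `φ` uniformly, by uniform continuity of `x`
on `[-h, T]`, and in `H¹(-h, 0)`, by continuity of translation in `L²` applied to `x` and `x'`.
Since `r` is Lipschitz for the `H¹` norm, the delayed time `t + r(x_{(t)})` tends to `r(φ)`, so
`x'(t) = g(t, x(t), x(t + r(x_{(t)})))` tends to `g(0, φ(0), φ(r(φ)))` by continuity of `g`. -/

section Continuity

variable {E : Type*} [NormedAddCommGroup E] {f : ℝ → E} {a b c : ℝ}

theorem ContinuousOn.tendsto_iSup_norm_comp_add_const_sub (hf : ContinuousOn f (Icc a c))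
    (hbc : b < c) :
    Tendsto (fun t => ⨆ s : Icc a b, ‖f (s + t) - f s‖) (𝓝[≥] 0) (𝓝 0) := by
  rw [Metric.tendsto_nhds]
  intro ε hε
  obtain ⟨δ, hδ, hfδ⟩ := Metric.uniformContinuousOn_iff.1
    (isCompact_Icc.uniformContinuousOn_of_continuous hf) (ε / 2) (half_pos hε)
  filter_upwards [Ico_mem_nhdsGE (lt_min hδ (sub_pos.2 hbc))] with t ht
  have hle : ⨆ s : Icc a b, ‖f (s + t) - f s‖ ≤ ε / 2 := by
    refine Real.iSup_le (fun ⟨s, hs⟩ => ?_) (half_pos hε).le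
    rw [← dist_eq_norm]
    refine (hfδ _ ⟨by linarith [hs.1, ht.1], by linarith [hs.2, ht.2, min_le_right δ (c - b)]⟩
      _ ⟨hs.1, hs.2.trans hbc.le⟩ ?_).le
    rw [Real.dist_eq, add_sub_cancel_left, abs_of_nonneg ht.1]
    exact ht.2.trans_le (min_le_left _ _)
  rw [Real.dist_0_eq_abs, abs_of_nonneg (Real.iSup_nonneg fun _ => norm_nonneg _)]
  linarith

end Continuity

namespace MeasureTheory

variable {α E : Type*} [MeasurableSpace α] [NormedAddCommGroup E] {μ : Measure α}

theorem integral_norm_sq_eq_lpNorm_sq {f : α → E} (hf : AEStronglyMeasurable f μ) :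
    ∫ x, ‖f x‖ ^ 2 ∂μ = lpNorm f 2 μ ^ 2 := by
  rw [lpNorm_eq_integral_norm_rpow_toReal two_ne_zero ENNReal.ofNat_ne_top hf,
    ENNReal.toReal_ofNat, ← Real.rpow_natCast _ 2,
    ← Real.rpow_mul (integral_nonneg fun x => by positivity)]
  norm_num

theorem MemLp.tendsto_lpNorm_comp_const_add_sub {ψ : ℝ → E} {p : ℝ≥0∞} [Fact (1 ≤ p)]
    (hψ : MemLp ψ p volume) (hp : p ≠ ∞) :
    Tendsto (fun t => lpNorm (fun s => ψ (t + s) - ψ s) p volume) (𝓝 0) (𝓝 0) := by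
  let τ : ℝ → C(ℝ, ℝ) := fun t => ⟨fun s => t + s, by fun_prop⟩
  have hτ : Continuous τ :=
    ContinuousMap.continuous_of_continuous_uncurry _ (continuous_fst.add continuous_snd)
  have hτm : ∀ t, MeasurePreserving (τ t) volume volume := measurePreserving_add_left volume
  let F : ℝ → Lp E p volume := fun t => Lp.compMeasurePreserving (τ t) (hτm t) (hψ.toLp ψ)
  have hF : Continuous F := continuous_const.compMeasurePreservingLp hτ hτm hp
  have hF_ae : ∀ t, F t =ᵐ[volume] fun s => ψ (t + s) :=
    fun t => (Lp.coeFn_compMeasurePreserving _ _).trans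
      ((hτm t).quasiMeasurePreserving.ae_eq_comp hψ.coeFn_toLp)
  have hnorm : ∀ t, ‖F t - F 0‖ = lpNorm (fun s => ψ (t + s) - ψ s) p volume := by
    intro t
    have hae : ⇑(F t - F 0) =ᵐ[volume] fun s => ψ (t + s) - ψ s := by
      filter_upwards [Lp.coeFn_sub (F t) (F 0), hF_ae t, hF_ae 0] with s h h₁ h₀
      rw [h, Pi.sub_apply, h₁, h₀, zero_add]
    rw [Lp.norm_def, eLpNorm_congr_ae hae, toReal_eLpNorm]
    exact ((hψ.comp_measurePreserving (hτm t)).sub hψ).aestronglyMeasurable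
  have := (hF.tendsto 0).sub_const (F 0)
  rw [sub_self, tendsto_zero_iff_norm_tendsto_zero] at this
  simpa only [hnorm] using this

theorem MemLp.comp_const_add_restrict_Ioo {f : ℝ → E} {a b c d : ℝ} {p : ℝ≥0∞} {t : ℝ}
    (hf : MemLp f p (volume.restrict (Ioo a b))) (hc : a ≤ t + c) (hd : t + d ≤ b) :
    MemLp (fun s => f (t + s)) p (volume.restrict (Ioo c d)) := by
  have hτ := (measurePreserving_add_left volume t).restrict_preimage
    (measurableSet_Ioo (a := a) (b := b))
  refine (hf.comp_measurePreserving hτ).mono_measure (Measure.restrict_mono ?_ le_rfl)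
  exact fun s hs => ⟨by linarith [hs.1], by linarith [hs.2]⟩

theorem MemLp.tendsto_setIntegral_norm_comp_const_add_sub_sq {f : ℝ → E} {a b c : ℝ}
    (hf : MemLp f 2 (volume.restrict (Ioo a c))) (hbc : b < c) :
    Tendsto (fun t => ∫ s in Ioo a b, ‖f (t + s) - f s‖ ^ 2) (𝓝[≥] 0) (𝓝 0) := by
  set ψ := (Ioo a c).indicator f with hψdef
  have hψ : MemLp ψ 2 volume := (memLp_indicator_iff_restrict measurableSet_Ioo).2 hf
  have hlim := (hψ.tendsto_lpNorm_comp_const_add_sub ENNReal.ofNat_ne_top).pow 2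
  rw [zero_pow two_ne_zero] at hlim
  refine squeeze_zero' (Eventually.of_forall fun t => setIntegral_nonneg measurableSet_Ioo
    fun s _ => by positivity) ?_ (tendsto_nhdsWithin_of_tendsto_nhds hlim)
  filter_upwards [Ico_mem_nhdsGE (sub_pos.2 hbc)] with t ht
  have hm : MemLp (fun s => ψ (t + s) - ψ s) 2 volume :=
    (hψ.comp_measurePreserving (measurePreserving_add_left volume t)).sub hψ
  calc ∫ s in Ioo a b, ‖f (t + s) - f s‖ ^ 2
      = ∫ s in Ioo a b, ‖ψ (t + s) - ψ s‖ ^ 2 := by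
        refine setIntegral_congr_fun measurableSet_Ioo fun s hs => ?_
        have hts : t + s ∈ Ioo a c := ⟨by linarith [hs.1, ht.1], by linarith [hs.2, ht.2]⟩
        have hs' : s ∈ Ioo a c := ⟨hs.1, hs.2.trans hbc⟩
        rw [hψdef, indicator_of_mem hts, indicator_of_mem hs']
    _ ≤ ∫ s, ‖ψ (t + s) - ψ s‖ ^ 2 :=
        setIntegral_le_integral ((memLp_two_iff_integrable_sq_norm hm.1).1 hm)
          (Eventually.of_forall fun s => by positivity)
    _ = lpNorm (fun s => ψ (t + s) - ψ s) 2 volume ^ 2 :=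
        integral_norm_sq_eq_lpNorm_sq hm.1

end MeasureTheory

section H1

variable {E : Type*} [NormedAddCommGroup E] {f g f' g' : ℝ → E} {a b : ℝ}

theorem H1norm_congr (hfg : EqOn f g (Ioo a b)) (hfg' : EqOn f' g' (Ioo a b)) :
    H1norm a b f f' = H1norm a b g g' := by
  simp only [H1norm]
  congr 2
  exacts [setIntegral_congr_fun measurableSet_Ioo fun s hs => by rw [hfg hs],
    setIntegral_congr_fun measurableSet_Ioo fun s hs => by rw [hfg' hs]]

variable [NormedSpace ℝ E] {c d : ℝ}

theorem MemH1.intervalIntegrable_deriv (hf : MemH1 a b f f') {x y : ℝ} (hx : x ∈ Icc a b)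
    (hy : y ∈ Icc a b) : IntervalIntegrable f' volume x y := by
  have : IntegrableOn f' (Icc a b) :=
    (integrableOn_Icc_iff_integrableOn_Ioo).2 (hf.derivMemL2.integrable one_le_two)
  exact (this.mono_set (uIcc_subset_Icc hx hy)).intervalIntegrable

theorem MemH1.sub_eq_integral_s15 (hf : MemH1 a b f f') {x y : ℝ} (hx : x ∈ Icc a b)
    (hy : y ∈ Icc a b) : f y - f x = ∫ s in x..y, f' s := by
  have ha : a ∈ Icc a b := left_mem_Icc.2 (hx.1.trans hx.2)
  rw [hf.ftc y hy, hf.ftc x hx, add_sub_add_left_eq_sub,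
    intervalIntegral.integral_interval_sub_left (hf.intervalIntegrable_deriv ha hy)
      (hf.intervalIntegrable_deriv ha hx)]

theorem MemH1.comp_const_add (hf : MemH1 a b f f') {t : ℝ} (hc : a ≤ t + c) (hd : t + d ≤ b) :
    MemH1 c d (fun s => f (t + s)) (fun s => f' (t + s)) where
  contOn := hf.contOn.comp (by fun_prop)
    fun s hs => ⟨by linarith [hs.1], by linarith [hs.2]⟩
  memL2 := hf.memL2.comp_const_add_restrict_Ioo hc hd
  derivMemL2 := hf.derivMemL2.comp_const_add_restrict_Ioo hc hd
  ftc u hu := by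
    rw [intervalIntegral.integral_comp_add_left f' t, ← hf.sub_eq_integral_s15
      ⟨hc, by linarith [hu.1, hu.2]⟩ ⟨by linarith [hu.1], by linarith [hu.2]⟩, add_sub_cancel]

theorem MemH1.congr (hf : MemH1 a b f f') (hfg : EqOn f g (Icc a b)) : MemH1 a b g f' where
  contOn := hf.contOn.congr hfg.symm
  memL2 := hf.memL2.ae_eq <| (ae_restrict_mem measurableSet_Ioo).mono
    fun s hs => hfg (Ioo_subset_Icc_self hs)
  derivMemL2 := hf.derivMemL2
  ftc u hu := by
    rw [← hfg hu, ← hfg (left_mem_Icc.2 (hu.1.trans hu.2))]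
    exact hf.ftc u hu

theorem MemH1.tendsto_H1norm_comp_const_add_sub (hf : MemH1 a c f f') (hbc : b < c) :
    Tendsto (fun t => H1norm a b (fun s => f (t + s) - f s) (fun s => f' (t + s) - f' s))
      (𝓝[≥] 0) (𝓝 0) := by
  simpa [H1norm] using ((hf.memL2.tendsto_setIntegral_norm_comp_const_add_sub_sq hbc).add
    (hf.derivMemL2.tendsto_setIntegral_norm_comp_const_add_sub_sq hbc)).sqrt

end H1

namespace SolSDD

variable {E : Type*} [NormedAddCommGroup E] [NormedSpace ℝ E] {h T : ℝ} {g : ℝ → E → E → E}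
  {r : (ℝ → E) → ℝ} {φ x xd : ℝ → E}

theorem memH1_initial (hx : SolSDD h T g r φ x xd) (hT : 0 ≤ T) :
    MemH1 (-h) 0 φ xd := by
  obtain ⟨hxH1, -, hx_init⟩ := hx
  have hx₀ : MemH1 (-h) 0 (fun s => x (0 + s)) (fun s => xd (0 + s)) :=
    hxH1.comp_const_add (by linarith) (by linarith)
  simp only [zero_add] at hx₀
  exact hx₀.congr hx_init

theorem tendsto_delay (hx : SolSDD h T g r φ x xd) (hT : 0 < T) {Lr : ℝ}
    (hr_lip : ∀ ψ ψd χ χd, MemH1 (-h) 0 ψ ψd → MemH1 (-h) 0 χ χd →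
      |r ψ - r χ| ≤ Lr * H1norm (-h) 0 (ψ - χ) (ψd - χd)) :
    Tendsto (fun t => r (prehist x t)) (𝓝[≥] 0) (𝓝 (r φ)) := by
  have hH1 := (hx.1.tendsto_H1norm_comp_const_add_sub hT).const_mul Lr
  rw [mul_zero] at hH1
  rw [tendsto_iff_dist_tendsto_zero]
  refine squeeze_zero' (Eventually.of_forall fun _ => dist_nonneg) ?_ hH1
  filter_upwards [Icc_mem_nhdsGE hT] with t ht
  calc dist (r (prehist x t)) (r φ)
      ≤ Lr * H1norm (-h) 0 (prehist x t - φ) ((fun s => xd (t + s)) - xd) :=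
        hr_lip _ _ _ _ (hx.1.comp_const_add (by linarith [ht.1]) (by linarith [ht.2]))
          (hx.memH1_initial hT.le)
    _ = Lr * H1norm (-h) 0 (fun s => x (t + s) - x s) (fun s => xd (t + s) - xd s) := by
        congr 1
        refine H1norm_congr (fun s hs => ?_) fun _ _ => rfl
        simp only [Pi.sub_apply, prehist, hx.2.2 s (Ioo_subset_Icc_self hs)]

theorem tendsto_deriv (hx : SolSDD h T g r φ x xd) (hT : 0 < T) {Lr : ℝ}
    (hr_range : ∀ ψ, r ψ ∈ Icc (-h) 0)
    (hr_lip : ∀ ψ ψd χ χd, MemH1 (-h) 0 ψ ψd → MemH1 (-h) 0 χ χd →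
      |r ψ - r χ| ≤ Lr * H1norm (-h) 0 (ψ - χ) (ψd - χd))
    (hg : ContinuousWithinAt (fun p : ℝ × E × E => g p.1 p.2.1 p.2.2) (Icc 0 T ×ˢ univ)
      (0, φ 0, φ (r φ))) :
    Tendsto xd (𝓝[>] 0) (𝓝 (g 0 (φ 0) (φ (r φ)))) := by
  have hh : 0 ≤ h := by linarith [(hr_range φ).1, (hr_range φ).2]
  rw [← hx.2.2 0 ⟨by linarith, le_rfl⟩, ← hx.2.2 _ (hr_range φ)] at hg ⊢
  have hsmall : ∀ᶠ t in 𝓝[>] (0 : ℝ), t ∈ Ioo 0 T := Ioo_mem_nhdsGT hT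
  have hx_tendsto : ∀ s ∈ Icc (-h) T, ∀ {u : ℝ → ℝ}, Tendsto u (𝓝[>] 0) (𝓝 s) →
      (∀ᶠ t in 𝓝[>] 0, u t ∈ Icc (-h) T) → Tendsto (fun t => x (u t)) (𝓝[>] 0) (𝓝 (x s)) :=
    fun s hs u hu hmem => (hx.1.contOn s hs).tendsto.comp (tendsto_nhdsWithin_iff.2 ⟨hu, hmem⟩)
  have hdelay : Tendsto (fun t => t + r (prehist x t)) (𝓝[>] 0) (𝓝 (r φ)) := by
    simpa using (tendsto_nhdsWithin_of_tendsto_nhds tendsto_id).add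
      ((hx.tendsto_delay hT hr_lip).mono_left (nhdsWithin_mono 0 Ioi_subset_Ici_self))
  have hargs : Tendsto (fun t => (t, x t, x (t + r (prehist x t)))) (𝓝[>] 0)
      (𝓝[Icc 0 T ×ˢ univ] (0, x 0, x (r φ))) := by
    refine tendsto_nhdsWithin_iff.2 ⟨?_, hsmall.mono fun t ht => ⟨Ioo_subset_Icc_self ht, trivial⟩⟩
    refine (tendsto_nhdsWithin_of_tendsto_nhds tendsto_id).prodMk_nhds
      ((hx_tendsto 0 ⟨by linarith, hT.le⟩ (tendsto_nhdsWithin_of_tendsto_nhds tendsto_id)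
        (hsmall.mono fun t ht =>
          Icc_subset_Icc_left (by linarith) (Ioo_subset_Icc_self ht))).prodMk_nhds
      (hx_tendsto (r φ) ⟨(hr_range φ).1, (hr_range φ).2.trans hT.le⟩ hdelay
        (hsmall.mono fun t ht => ⟨by linarith [ht.1, (hr_range (prehist x t)).1],
          by linarith [ht.2, (hr_range (prehist x t)).2]⟩)))
  refine (hg.tendsto.comp hargs).congr' ?_
  filter_upwards [hsmall] with t ht using (hx.2.1 t ht).symm

end SolSDD

theorem stmt15_general (h T : ℝ) (hT : 0 < T) (n : ℕ)
    (g : ℝ → EuclideanSpace ℝ (Fin n) → EuclideanSpace ℝ (Fin n) → EuclideanSpace ℝ (Fin n))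
    (hg_cont : ContinuousOn
      (fun p : ℝ × EuclideanSpace ℝ (Fin n) × EuclideanSpace ℝ (Fin n) => g p.1 p.2.1 p.2.2)
      (Set.Icc 0 T ×ˢ (Set.univ : Set (EuclideanSpace ℝ (Fin n) × EuclideanSpace ℝ (Fin n)))))
    (r : (ℝ → EuclideanSpace ℝ (Fin n)) → ℝ)
    (hr_range : ∀ ψ, r ψ ∈ Set.Icc (-h) 0)
    (Lr : ℝ)
    (hr_lip : ∀ φ φd ψ ψd, MemH1 (-h) 0 φ φd → MemH1 (-h) 0 ψ ψd →
      |r φ - r ψ| ≤ Lr * H1norm (-h) 0 (φ - ψ) (φd - ψd))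
    (φ φd : ℝ → EuclideanSpace ℝ (Fin n))
    (x xd : ℝ → EuclideanSpace ℝ (Fin n)) (hx : SolSDD h T g r φ x xd) :
    ∀ ε > (0 : ℝ), ∃ Tε : ℝ, 0 < Tε ∧ Tε ≤ T ∧
      ∀ t, 0 < t → t ≤ Tε →
        (⨆ s : Set.Icc (-h) (0 : ℝ), ‖x ((s : ℝ) + t) - φ (s : ℝ)‖) +
            ‖xd t - g 0 (φ 0) (φ (r φ))‖ ≤ ε := by
  have hsup : Tendsto (fun t => ⨆ s : Icc (-h) (0 : ℝ), ‖x (s + t) - φ s‖) (𝓝[>] 0) (𝓝 0) := by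
    refine ((hx.1.contOn.tendsto_iSup_norm_comp_add_const_sub hT).mono_left
      (nhdsWithin_mono 0 Ioi_subset_Ici_self)).congr fun t => ?_
    exact iSup_congr fun s => by rw [hx.2.2 s s.2]
  have hderiv : Tendsto (fun t => ‖xd t - g 0 (φ 0) (φ (r φ))‖) (𝓝[>] 0) (𝓝 0) :=
    tendsto_iff_norm_sub_tendsto_zero.1 <| hx.tendsto_deriv hT hr_range hr_lip
      (hg_cont _ ⟨⟨le_rfl, hT.le⟩, mem_univ _⟩)
  intro ε hε
  have hsum := hsup.add hderiv
  rw [add_zero] at hsum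
  obtain ⟨u, hu, hsub⟩ :=
    mem_nhdsGT_iff_exists_Ioc_subset.1 (hsum.eventually (eventually_lt_nhds hε))
  exact ⟨min u T, lt_min hu hT, min_le_right _ _,
    fun t ht htu => (hsub ⟨ht, htu.trans (min_le_left _ _)⟩).le⟩

/-- **Permanence principle** (Theorem 4.13). If `x ∈ H¹(-h,T;ℝⁿ)` solves the
state-dependent delay equation with Lipschitz pre-history `φ`, then for every `ε > 0`
there is `T_ε ∈ (0,T]` such that for all `0 < t ≤ T_ε`,
`sup_{s ∈ [-h,0]} ‖x(s+t) - φ(s)‖ + ‖x'(t) - g(0, φ(0), φ(r(φ)))‖ ≤ ε`. -/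
theorem stmt15 (h T : ℝ) (hh : 0 < h) (hT : 0 < T) (n : ℕ)
    (g : ℝ → EuclideanSpace ℝ (Fin n) → EuclideanSpace ℝ (Fin n) → EuclideanSpace ℝ (Fin n))
    (hg_cont : ContinuousOn
      (fun p : ℝ × EuclideanSpace ℝ (Fin n) × EuclideanSpace ℝ (Fin n) => g p.1 p.2.1 p.2.2)
      (Set.Icc 0 T ×ˢ (Set.univ : Set (EuclideanSpace ℝ (Fin n) × EuclideanSpace ℝ (Fin n)))))
    (L : ℝ) (hL : 0 ≤ L)
    (hg_lip : ∀ t ∈ Set.Icc (0 : ℝ) T, ∀ x y u v,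
      ‖g t x u - g t y v‖ ≤ L * (‖x - y‖ + ‖u - v‖))
    (r : (ℝ → EuclideanSpace ℝ (Fin n)) → ℝ)
    (hr_range : ∀ ψ, r ψ ∈ Set.Icc (-h) 0)
    (Lr : ℝ)
    (hr_lip : ∀ φ φd ψ ψd, MemH1 (-h) 0 φ φd → MemH1 (-h) 0 ψ ψd →
      |r φ - r ψ| ≤ Lr * H1norm (-h) 0 (φ - ψ) (φd - ψd))
    (φ φd : ℝ → EuclideanSpace ℝ (Fin n)) (hφ : MemH1 (-h) 0 φ φd)
    (M : ℝ) (hφbd : ∀ᵐ t ∂(volume.restrict (Set.Ioo (-h) (0 : ℝ))), ‖φd t‖ ≤ M)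
    (x xd : ℝ → EuclideanSpace ℝ (Fin n)) (hx : SolSDD h T g r φ x xd) :
    ∀ ε > (0 : ℝ), ∃ Tε : ℝ, 0 < Tε ∧ Tε ≤ T ∧
      ∀ t, 0 < t → t ≤ Tε →
        (⨆ s : Set.Icc (-h) (0 : ℝ), ‖x ((s : ℝ) + t) - φ (s : ℝ)‖) +
            ‖xd t - g 0 (φ 0) (φ (r φ))‖ ≤ ε :=
  stmt15_general h T hT n g hg_cont r hr_range Lr hr_lip φ φd x xd hx
end
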